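/- With φ_T as defined, for every natural number n ≥ 1: if there is a prime strictly between n² and (n+1)², then φ_T(n², 2n, n) ≤ π(2n) - π(n). Consequently, Legendre's conjecture holds for all n if and only if φ_T(n², 2n, n) ≤ π(2n) - π(n) for all n. -/

import Mathlib

open ArithmeticFunction Nat Finset

/-- Index set: squarefree `d > 1` all of whose prime factors are `≤ n`. -/
def sqfSet (n : ℕ) : Finset ℕ :=
  (Finset.range (primorial n + 1)).filter
    (fun d => 1 < d ∧ Squarefree d ∧ ∀ p ∈ d.primeFactors, p ≤ n)

/-- The transformed Legendre function `φ_T`. -/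
def phiT (M₁ M₂ n : ℕ) : ℤ :=
  -∑ d ∈ sqfSet n, ArithmeticFunction.moebius d * (((M₁ % d + M₂ % d) / d : ℕ) : ℤ)

/-!
Möbius inversion over the divisors of `primorial n` turns `phiT M₁ M₂ n` into
`Φ M₁ + Φ M₂ - Φ (M₁ + M₂)`, where `Φ x` counts the `m ≤ x` coprime to `primorial n`: the summand
`⌊(M₁ mod d + M₂ mod d) / d⌋` is the carry `⌊(M₁ + M₂) / d⌋ - ⌊M₁ / d⌋ - ⌊M₂ / d⌋`.
Below `(n + 1)²` those `m` are `1` and the primes in `(n, x]`, so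
`phiT (n²) (2n) n = 1 + π (2n) - π n - (π (n² + 2n) - π (n²))`, and the inequality holds exactly
when there is a prime in `(n², n² + 2n]`.
-/

open scoped ArithmeticFunction.Moebius

lemma dvd_primorial_iff {d n : ℕ} :
    d ∣ primorial n ↔ Squarefree d ∧ ∀ p ∈ d.primeFactors, p ≤ n := by
  refine ⟨fun h ↦ ⟨(squarefree_primorial n).squarefree_of_dvd h, fun p hp ↦ ?_⟩,
    fun ⟨hsq, hle⟩ ↦ ?_⟩
  · have := primeFactors_mono h (primorial_ne_zero n) hp
    rw [primeFactors_primorial] at this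
    exact le_of_mem_primesLE this
  · rw [← prod_primeFactors_of_squarefree hsq, prod_primeFactors_dvd_iff (primorial_ne_zero n),
      primeFactors_primorial]
    exact fun p hp ↦ mem_primesLE.2 ⟨hle p hp, prime_of_mem_primeFactors hp⟩

lemma sqfSet_eq_erase_divisors (n : ℕ) : sqfSet n = (primorial n).divisors.erase 1 := by
  ext d
  simp only [sqfSet, mem_filter, mem_range, mem_erase, mem_divisors, primorial_ne_zero,
    ne_eq, not_false_eq_true, and_true]
  constructor
  · rintro ⟨-, h1, hd⟩
    exact ⟨h1.ne', dvd_primorial_iff.2 hd⟩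
  · rintro ⟨h1, hd⟩
    exact ⟨Nat.lt_succ_of_le (le_of_dvd (primorial_pos n) hd),
      one_lt_iff_ne_zero_and_ne_one.2 ⟨ne_zero_of_dvd_ne_zero (primorial_ne_zero n) hd, h1⟩,
      dvd_primorial_iff.1 hd⟩

theorem card_filter_coprime_Ioc_eq_sum_moebius {P : ℕ} (hP : P ≠ 0) (x : ℕ) :
    (#{m ∈ Ioc 0 x | m.Coprime P} : ℤ) = ∑ d ∈ P.divisors, μ d * (x / d : ℕ) := by
  have indicator (m : ℕ) :
      (if m.Coprime P then 1 else 0 : ℤ) = ∑ d ∈ P.divisors with d ∣ m, μ d := by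
    have : {d ∈ P.divisors | d ∣ m} = (m.gcd P).divisors := by
      ext d
      simp only [mem_filter, mem_divisors, Nat.dvd_gcd_iff, ne_eq, gcd_eq_zero_iff, hP]
      tauto
    rw [this, ← coe_mul_zeta_apply, moebius_mul_coe_zeta, one_apply]
  calc (#{m ∈ Ioc 0 x | m.Coprime P} : ℤ)
      = ∑ m ∈ Ioc 0 x, if m.Coprime P then 1 else 0 := by rw [natCast_card_filter]
    _ = ∑ m ∈ Ioc 0 x, ∑ d ∈ P.divisors with d ∣ m, μ d := sum_congr rfl fun m _ ↦ indicator m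
    _ = ∑ d ∈ P.divisors, ∑ m ∈ Ioc 0 x with d ∣ m, μ d := by
      simp_rw [sum_filter]; exact sum_comm
    _ = ∑ d ∈ P.divisors, μ d * (x / d : ℕ) := by
      simp_rw [sum_const, Ioc_filter_dvd_card_eq_div, nsmul_eq_mul, mul_comm]

/-- Legendre's `φ(x, π n)`. -/
def legendrePhi (x n : ℕ) : ℕ := #{m ∈ Ioc 0 x | m.Coprime (primorial n)}

lemma add_div_eq_div_add_div_add_mod_div (a b c : ℕ) :
    (a + b) / c = a / c + b / c + (a % c + b % c) / c := by
  rcases c.eq_zero_or_pos with rfl | hc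
  · simp
  · conv_lhs => rw [← mod_add_div a c, ← mod_add_div b c]
    rw [show a % c + c * (a / c) + (b % c + c * (b / c)) = a % c + b % c + c * (a / c + b / c) by
      ring, add_mul_div_left _ _ hc]
    ring

lemma phiT_eq_legendrePhi (M₁ M₂ n : ℕ) :
    phiT M₁ M₂ n = legendrePhi M₁ n + legendrePhi M₂ n - legendrePhi (M₁ + M₂) n := by
  simp only [legendrePhi, card_filter_coprime_Ioc_eq_sum_moebius (primorial_ne_zero n)]
  rw [phiT, sqfSet_eq_erase_divisors, sum_erase _ (by simp), ← sum_add_distrib, ← sum_sub_distrib,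
    ← sum_neg_distrib]
  refine sum_congr rfl fun d _ ↦ ?_
  rw [add_div_eq_div_add_div_add_mod_div M₁ M₂ d]
  push_cast
  ring

lemma coprime_primorial_iff {m n : ℕ} :
    m.Coprime (primorial n) ↔ ∀ p, p.Prime → p ∣ m → n < p := by
  rw [← not_iff_not, Prime.not_coprime_iff_dvd]
  simp only [not_forall, not_lt, exists_prop]
  exact exists_congr fun p ↦ and_congr_right fun hp ↦ and_congr_right fun _ ↦ hp.dvd_primorial_iff

lemma prime_of_coprime_primorial {m n : ℕ} (h1 : 1 < m) (hm : m < (n + 1) ^ 2)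
    (hcop : m.Coprime (primorial n)) : m.Prime := by
  by_contra hnp
  have hmin : n < m.minFac := coprime_primorial_iff.1 hcop _ (minFac_prime h1.ne') (minFac_dvd m)
  have := minFac_sq_le_self (by omega) hnp
  have : (n + 1) ^ 2 ≤ m.minFac ^ 2 := Nat.pow_le_pow_left hmin 2
  omega

lemma primeCounting_eq_add_card_Ioc {a b : ℕ} (hab : a ≤ b) :
    primeCounting b = primeCounting a + #{p ∈ Ioc a b | p.Prime} := by
  simp only [← primesLE_card_eq_primeCounting, primesLE_eq_filter_Ioc_zero]
  rw [← card_union_of_disjoint (disjoint_filter_filter (Ioc_disjoint_Ioc_of_le le_rfl)),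
    ← filter_union, Ioc_union_Ioc_eq_Ioc (zero_le a) hab]

lemma legendrePhi_add_primeCounting {x n : ℕ} (hn : 0 < n) (hnx : n ≤ x)
    (hx : x < (n + 1) ^ 2) :
    legendrePhi x n + primeCounting n = 1 + primeCounting x := by
  have : {m ∈ Ioc 0 x | m.Coprime (primorial n)} = insert 1 {p ∈ Ioc n x | p.Prime} := by
    ext m
    simp only [mem_filter, mem_Ioc, mem_insert]
    constructor
    · rintro ⟨⟨hm0, hmx⟩, hcop⟩
      rcases (Nat.one_le_iff_ne_zero.2 hm0.ne').eq_or_lt with rfl | hm1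
      · exact .inl rfl
      · have hmp := prime_of_coprime_primorial hm1 (hmx.trans_lt hx) hcop
        exact .inr ⟨⟨coprime_primorial_iff.1 hcop m hmp dvd_rfl, hmx⟩, hmp⟩
    · rintro (rfl | ⟨⟨hnm, hmx⟩, hmp⟩)
      · exact ⟨⟨one_pos, hn.trans_le hnx⟩, coprime_one_left _⟩
      · refine ⟨⟨hmp.pos, hmx⟩, coprime_primorial_iff.2 fun p hp hpm ↦ ?_⟩
        rwa [(prime_dvd_prime_iff_eq hp hmp).1 hpm]
  rw [legendrePhi, this, card_insert_of_notMem (by simp [not_prime_one]),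
    primeCounting_eq_add_card_Ioc hnx]
  ring

lemma exists_prime_Ioc_iff_primeCounting_lt {a b : ℕ} :
    (∃ p, p.Prime ∧ a < p ∧ p ≤ b) ↔ primeCounting a < primeCounting b := by
  constructor
  · rintro ⟨p, hp, hap, hpb⟩
    rw [primeCounting_eq_add_card_Ioc (hap.le.trans hpb), Nat.lt_add_right_iff_pos, card_pos]
    exact ⟨p, mem_filter.2 ⟨mem_Ioc.2 ⟨hap, hpb⟩, hp⟩⟩
  · intro h
    have hab : a ≤ b := le_of_not_ge fun hba ↦ h.not_ge (monotone_primeCounting hba)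
    rw [primeCounting_eq_add_card_Ioc hab, Nat.lt_add_right_iff_pos, card_pos] at h
    obtain ⟨p, hp⟩ := h
    simp only [mem_filter, mem_Ioc] at hp
    exact ⟨p, hp.2, hp.1⟩

lemma exists_prime_between_sq_iff_phiT_le {n : ℕ} (hn : 1 ≤ n) :
    (∃ p, p.Prime ∧ n ^ 2 < p ∧ p < (n + 1) ^ 2) ↔
      phiT (n ^ 2) (2 * n) n ≤ (primeCounting (2 * n) : ℤ) - primeCounting n := by
  have hsq : (n + 1) ^ 2 = n ^ 2 + 2 * n + 1 := by ring
  have hn2 : n ≤ n ^ 2 := Nat.le_self_pow two_ne_zero n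
  have h₁ := legendrePhi_add_primeCounting hn hn2 (by omega)
  have h₂ := legendrePhi_add_primeCounting (x := 2 * n) hn (by omega) (by nlinarith)
  have h₃ := legendrePhi_add_primeCounting (x := n ^ 2 + 2 * n) hn (by omega) (by omega)
  have hπ := exists_prime_Ioc_iff_primeCounting_lt (a := n ^ 2) (b := n ^ 2 + 2 * n)
  simp only [hsq, Nat.lt_succ_iff] at hπ ⊢
  rw [phiT_eq_legendrePhi, hπ]
  omega

theorem stmt_5 :
    (∀ n : ℕ, 1 ≤ n → (∃ p, Nat.Prime p ∧ n ^ 2 < p ∧ p < (n + 1) ^ 2) →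
      phiT (n ^ 2) (2 * n) n ≤ (Nat.primeCounting (2 * n) : ℤ) - Nat.primeCounting n) ∧
    ((∀ n : ℕ, 1 ≤ n → ∃ p, Nat.Prime p ∧ n ^ 2 < p ∧ p < (n + 1) ^ 2) ↔
      (∀ n : ℕ, 1 ≤ n →
        phiT (n ^ 2) (2 * n) n ≤ (Nat.primeCounting (2 * n) : ℤ) - Nat.primeCounting n)) :=
  ⟨fun _ hn ↦ (exists_prime_between_sq_iff_phiT_le hn).1,
    forall₂_congr fun _ hn ↦ exists_prime_between_sq_iff_phiT_le hn⟩
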